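/- arXiv:1902.07783 — 6 statements merged into one kernel-verified Lean document; each statement's English description precedes it below -/
import Mathlib

section
/- Let K be a compact Hausdorff space, V ⊆ K an open set, and a a real number. Then the set U = {μ ∈ M(K) : μ⁺(V) > a} of signed Radon measures whose positive part assigns measure greater than a to V is open in the weak* topology on M(K) = C(K)*. -/
/-! For mutually singular finite regular measures `p ⟂ₘ n`, `p V` is the supremum of
`∫ f ∂p - ∫ f ∂n` over continuous `f : X → [0, 1]` vanishing off the open set `V`: pick a compact
`C ⊆ V` of almost full `p`-measure inside an `n`-null set, an open `W ⊇ C` of small `n`-measure,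
and an Urysohn function equal to `1` on `C` and to `0` off `W ∩ V`. Applied to the Jordan parts
`μ⁺ ⟂ₘ μ⁻`, this writes `{μ | a < μ⁺ V}` as a union of weak* open half-spaces
`{μ | a < ∫ f ∂μ}`. -/
open MeasureTheory Topology Set
open scoped ENNReal

section

variable {X : Type*} [MeasurableSpace X]

lemma measureReal_le_integral_of_one_le {μ : Measure X} {f : X → ℝ} (hf : Integrable f μ)
    (hf₀ : 0 ≤ f) {s : Set X} (hs : ∀ x ∈ s, 1 ≤ f x) : μ.real s ≤ ∫ x, f x ∂μ :=
  ENNReal.toReal_le_of_le_ofReal (integral_nonneg hf₀)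
    (hf.measure_le_integral (ae_of_all _ hf₀) hs)

lemma integral_le_measureReal (μ : Measure X) [IsFiniteMeasure μ] {f : X → ℝ} {s : Set X}
    (hs : ∀ x ∈ s, f x ≤ 1) (hsc : ∀ x ∈ sᶜ, f x ≤ 0) : ∫ x, f x ∂μ ≤ μ.real s :=
  (ENNReal.ofReal_le_iff_le_toReal (measure_ne_top μ s)).mp (integral_le_measure hs hsc)

variable [TopologicalSpace X]

def unitFunctionsVanishingOff (V : Set X) : Set C(X, ℝ) :=
  {f | (∀ x, f x ∈ Icc (0 : ℝ) 1) ∧ ∀ x ∉ V, f x = 0}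

lemma integral_sub_integral_le_measureReal (p n : Measure X) [IsFiniteMeasure p] {V : Set X}
    {f : C(X, ℝ)} (hf : f ∈ unitFunctionsVanishingOff V) :
    ∫ x, f x ∂p - ∫ x, f x ∂n ≤ p.real V := by
  obtain ⟨hf01, hf0⟩ := hf
  have hp : ∫ x, f x ∂p ≤ p.real V :=
    integral_le_measureReal p (fun x _ => (hf01 x).2) (fun x hx => (hf0 x hx).le)
  have hn : 0 ≤ ∫ x, f x ∂n := integral_nonneg fun x => (hf01 x).1
  linarith

variable [OpensMeasurableSpace X]

lemma MeasureTheory.Measure.MutuallySingular.exists_isCompact_isOpen_lt_add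
    {p n : Measure X} [IsFiniteMeasure p] [p.InnerRegularCompactLTTop] [n.OuterRegular]
    (hpn : p ⟂ₘ n) {V : Set X} (hV : IsOpen V) {ε : ℝ≥0∞} (hε : ε ≠ 0) :
    ∃ C W, IsCompact C ∧ IsOpen W ∧ C ⊆ W ∧ W ⊆ V ∧ p V < p C + ε ∧ n W < ε := by
  obtain ⟨t, ht, hpt, hnt⟩ := hpn
  obtain ⟨C, hCV, hC, hpC⟩ :=
    (hV.measurableSet.diff ht).exists_isCompact_lt_add (measure_ne_top p _) hε
  have hnC : n C = 0 := measure_mono_null (fun x hx => (hCV hx).2) hnt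
  obtain ⟨W, hCW, hW, hnW⟩ := C.exists_isOpen_lt_of_lt ε (hnC ▸ pos_iff_ne_zero.mpr hε)
  refine ⟨C, W ∩ V, hC, hW.inter hV, subset_inter hCW fun x hx => (hCV hx).1, inter_subset_right,
    ?_, (measure_mono inter_subset_left).trans_lt hnW⟩
  rwa [measure_sdiff_null hpt] at hpC

lemma exists_lt_integral_sub_integral [LocallyCompactSpace X] [RegularSpace X]
    {p n : Measure X} [IsFiniteMeasure p] [IsFiniteMeasure n] [p.InnerRegularCompactLTTop]
    [n.OuterRegular] (hpn : p ⟂ₘ n) {V : Set X} (hV : IsOpen V) {a : ℝ} (ha : a < p.real V) :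
    ∃ f ∈ unitFunctionsVanishingOff V, a < ∫ x, f x ∂p - ∫ x, f x ∂n := by
  set ε := (p.real V - a) / 2 with hε_def
  have hε : 0 < ε := by linarith
  obtain ⟨C, W, hC, hW, hCW, hWV, hpC, hnW⟩ :=
    hpn.exists_isCompact_isOpen_lt_add hV (ENNReal.ofReal_pos.mpr hε).ne'
  obtain ⟨f, hf1, hf0, hfc, hf01⟩ := exists_continuous_one_zero_of_isCompact hC hW.isClosed_compl
    (disjoint_compl_right_iff_subset.mpr hCW)
  have hfp : p.real C ≤ ∫ x, f x ∂p :=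
    measureReal_le_integral_of_one_le (f.continuous.integrable_of_hasCompactSupport hfc)
      (fun x => (hf01 x).1) (fun x hx => (hf1 hx).ge)
  have hfn : ∫ x, f x ∂n ≤ n.real W :=
    integral_le_measureReal n (fun x _ => (hf01 x).2) (fun x hx => (hf0 hx).le)
  have hpC' : p.real V < p.real C + ε := by
    have := ENNReal.toReal_strict_mono (by finiteness) hpC
    rwa [ENNReal.toReal_add (measure_ne_top p C) ENNReal.ofReal_ne_top,
      ENNReal.toReal_ofReal hε.le] at this
  have hnW' : n.real W < ε := (ENNReal.lt_ofReal_iff_toReal_lt (measure_ne_top n W)).mp hnW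
  exact ⟨f, ⟨hf01, fun x hx => hf0 fun hxW => hx (hWV hxW)⟩, by linarith⟩

theorem lt_measureReal_iff_exists_integral_sub_integral [LocallyCompactSpace X] [RegularSpace X]
    {p n : Measure X} [IsFiniteMeasure p] [IsFiniteMeasure n] [p.InnerRegularCompactLTTop]
    [n.OuterRegular] (hpn : p ⟂ₘ n) {V : Set X} (hV : IsOpen V) (a : ℝ) :
    a < p.real V ↔ ∃ f ∈ unitFunctionsVanishingOff V, a < ∫ x, f x ∂p - ∫ x, f x ∂n :=
  ⟨exists_lt_integral_sub_integral hpn hV, fun ⟨_, hf, ha⟩ =>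
    ha.trans_le (integral_sub_integral_le_measureReal p n hf)⟩

end

/-- For a compact Hausdorff space `K`, an open set `V ⊆ K` and `a : ℝ`,
the set `{μ ∈ M(K) : μ⁺(V) > a}` of signed Radon measures (i.e. signed measures whose
Jordan decomposition parts are regular) is open in the weak* topology on `M(K) = C(K)*`,
i.e. in the topology induced by the pairing `μ ↦ (f ↦ ∫ f dμ⁺ - ∫ f dμ⁻)` with `C(K, ℝ)`. -/
theorem stmt0 {K : Type*} [TopologicalSpace K] [CompactSpace K] [T2Space K]
    [MeasurableSpace K] [BorelSpace K] (V : Set K) (hV : IsOpen V) (a : ℝ) :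
    IsOpen[TopologicalSpace.induced
      (fun μ : {μ : SignedMeasure K //
          μ.toJordanDecomposition.posPart.Regular ∧ μ.toJordanDecomposition.negPart.Regular} =>
        fun f : C(K, ℝ) =>
          (∫ x, f x ∂μ.1.toJordanDecomposition.posPart)
            - ∫ x, f x ∂μ.1.toJordanDecomposition.negPart)
      Pi.topologicalSpace]
      {μ : {μ : SignedMeasure K //
          μ.toJordanDecomposition.posPart.Regular ∧ μ.toJordanDecomposition.negPart.Regular} |
        a < (μ.1.toJordanDecomposition.posPart V).toReal} := by
  refine isOpen_induced_iff.mpr ⟨⋃ f ∈ unitFunctionsVanishingOff V, {g | a < g f}, ?_, ?_⟩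
  · exact isOpen_biUnion fun f _ => isOpen_lt continuous_const (continuous_apply f)
  · ext μ
    have := μ.2.1
    have := μ.2.2
    simp only [mem_preimage, mem_iUnion₂, exists_prop]
    exact (lt_measureReal_iff_exists_integral_sub_integral
      μ.1.toJordanDecomposition.mutuallySingular hV a).symm
end

section
/- Let L be a compact Hausdorff space and V ⊆ L an open subset that is an Fσ set and is metrizable in the subspace topology. Then there exists a metric space Z and a continuous map g : L → Z such that g is injective on V and g(V) ∩ g(L \ V) = ∅. -/
/-!
Write `V` as the increasing union of the compact sets `K n = F 0 ∪ ⋯ ∪ F n`. Each `K n` is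
compact metrizable, so it embeds into `ℕ → ℝ`, and by Tietze this embedding extends to `L`; the
countably many extensions together are injective on `V`. Urysohn functions equal to `0` on `K n`
and `1` off `V` keep `g(V)` away from `g(L \ V)`. All of it lands in a countable product of
copies of `ℝ`, which is metrizable.
-/

open TopologicalSpace Set

section
variable {X : Type*} [TopologicalSpace X] [NormalSpace X]

theorem IsClosed.exists_continuous_injOn {K : Set X} (hK : IsClosed K) [T3Space K]
    [SecondCountableTopology K] : ∃ f : C(X, ℕ → ℝ), InjOn f K := by
  obtain ⟨e, he⟩ := exists_embedding_l_infty K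
  let f₀ : C(K, ℕ → ℝ) :=
    ⟨fun x => e x, BoundedContinuousFunction.continuous_coe.comp he.continuous⟩
  obtain ⟨f, hf⟩ := f₀.exists_restrict_eq hK
  refine ⟨f, fun x hx y hy hxy => ?_⟩
  have : f₀ ⟨x, hx⟩ = f₀ ⟨y, hy⟩ := by rw [← hf]; exact hxy
  exact congrArg Subtype.val (he.injective (DFunLike.coe_injective this))

theorem exists_continuous_injOn_iUnion {K : ℕ → Set X} (hK : ∀ n, IsClosed (K n))
    (hmono : Monotone K) [∀ n, T3Space (K n)] [∀ n, SecondCountableTopology (K n)] :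
    ∃ f : C(X, ℕ → ℕ → ℝ), InjOn f (⋃ n, K n) := by
  choose E hE using fun n => (hK n).exists_continuous_injOn
  refine ⟨ContinuousMap.pi E, ?_⟩
  simp only [InjOn, mem_iUnion]
  rintro x ⟨a, hxa⟩ y ⟨b, hyb⟩ hxy
  exact hE (max a b) (hmono (le_max_left a b) hxa) (hmono (le_max_right a b) hyb)
    (congrFun hxy (max a b))

theorem exists_continuous_disjoint_image_compl {V : Set X} (hV : IsOpen V) {K : ℕ → Set X}
    (hK : ∀ n, IsClosed (K n)) (hKV : ⋃ n, K n = V) :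
    ∃ u : C(X, ℕ → ℝ), Disjoint (u '' V) (u '' Vᶜ) := by
  have hKdisj n : Disjoint (K n) Vᶜ := disjoint_compl_right_iff_subset.2 (hKV ▸ subset_iUnion K n)
  choose u hu₀ hu₁ _ using fun n =>
    exists_continuous_zero_one_of_isClosed (hK n) hV.isClosed_compl (hKdisj n)
  refine ⟨ContinuousMap.pi u, disjoint_left.2 ?_⟩
  rintro _ ⟨x, hx, rfl⟩ ⟨y, hy, hxy⟩
  obtain ⟨n, hn⟩ := mem_iUnion.1 (hKV ▸ hx)
  have := congrFun hxy n
  simp only [ContinuousMap.pi_eval, hu₀ n hn, hu₁ n hy, Pi.zero_apply, Pi.one_apply] at this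
  exact one_ne_zero this

end

/-- If `V` is an open, `Fσ`, metrizable subset of a compact Hausdorff space `L`,
then there are a metric space `Z` and a continuous `g : L → Z` injective on `V` with
`g(V) ∩ g(L \ V) = ∅`. -/
theorem stmt4 {L : Type*} [TopologicalSpace L] [CompactSpace L] [T2Space L]
    (V : Set L) (hVopen : IsOpen V)
    (hFsigma : ∃ F : ℕ → Set L, (∀ n, IsClosed (F n)) ∧ V = ⋃ n, F n)
    (hmetr : TopologicalSpace.MetrizableSpace ↥V) :
    ∃ (Z : Type) (_ : MetricSpace Z) (g : L → Z),
      Continuous g ∧ Set.InjOn g V ∧ (g '' V) ∩ (g '' Vᶜ) = ∅ := by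
  obtain ⟨F, hF, hFV⟩ := hFsigma
  have hKc n : IsCompact (accumulate F n) := isCompact_accumulate (fun n => (hF n).isCompact) n
  have hKV : ⋃ n, accumulate F n = V := by rw [iUnion_accumulate, hFV]
  have hKmetr (n : ℕ) : MetrizableSpace (accumulate F n) :=
    (Topology.IsEmbedding.inclusion (hKV ▸ subset_iUnion _ n)).metrizableSpace
  have hKcompact n : CompactSpace (accumulate F n) := isCompact_iff_compactSpace.1 (hKc n)
  obtain ⟨f, hf⟩ := exists_continuous_injOn_iUnion (fun n => (hKc n).isClosed) monotone_accumulate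
  obtain ⟨u, hu⟩ := exists_continuous_disjoint_image_compl hVopen (fun n => (hKc n).isClosed) hKV
  refine ⟨(ℕ → ℕ → ℝ) × (ℕ → ℝ), metrizableSpaceMetric _, fun x => (f x, u x),
    by fun_prop, fun x hx y hy hxy => hf (hKV ▸ hx) (hKV ▸ hy) (congrArg Prod.fst hxy), ?_⟩
  rw [← disjoint_iff_inter_eq_empty]
  have hsnd (s : Set L) : (fun x => (f x, u x)) '' s ⊆ Prod.snd ⁻¹' (u '' s) :=
    image_subset_iff.2 fun x hx => mem_image_of_mem u hx
  exact (hu.preimage Prod.snd).mono (hsnd V) (hsnd Vᶜ)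
end

section
/- Let K be a compact Hausdorff space of finite Cantor–Bendixson height (i.e., scattered with K^(n) = ∅ for some finite n), let λ be an uncountable regular cardinal, and suppose |K| ≥ λ. Then K contains a subspace homeomorphic to the one-point compactification of a discrete space of cardinality λ. -/
open Topology

/-- The Cantor–Bendixson derived set: the set of accumulation points of `s`. -/
def derivSet {X : Type*} [TopologicalSpace X] (s : Set X) : Set X :=
  {x | AccPt x (Filter.principal s)}

/-- The one-point (Aleksandrov) compactification of a *discrete* space `D`. -/
def DiscreteOnePoint (D : Type*) : Type _ := OnePoint D

instance (D : Type*) : TopologicalSpace (DiscreteOnePoint D) :=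
  letI : TopologicalSpace D := ⊥
  inferInstanceAs (TopologicalSpace (OnePoint D))

lemma derivSet_eq_derivedSet {X : Type*} [TopologicalSpace X] (s : Set X) :
    derivSet s = derivedSet s := rfl

lemma derivSet_mono {X : Type*} [TopologicalSpace X] {s t : Set X} (h : s ⊆ t) :
    derivSet s ⊆ derivSet t := derivedSet_mono s t h

lemma derivSet_iter_mono {X : Type*} [TopologicalSpace X] (m : ℕ) {s t : Set X} (h : s ⊆ t) :
    derivSet^[m] s ⊆ derivSet^[m] t := by
  induction m generalizing s t with
  | zero => simpa
  | succ m ih =>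
    rw [Function.iterate_succ_apply, Function.iterate_succ_apply]
    exact ih (derivSet_mono h)

/-- Fact 1: in a compact space, if `F` is closed and `U` is an open set containing all
accumulation points of `F`, then `F \ U` is finite. -/
lemma finite_diff_of_derivSet_subset {K : Type*} [TopologicalSpace K] [CompactSpace K]
    {F U : Set K} (hF : IsClosed F) (hU : IsOpen U) (h : derivSet F ⊆ U) :
    (F \ U).Finite := by
  have hcpt : IsCompact (F \ U) := (hF.sdiff hU).isCompact
  have key : ∀ x ∈ F \ U, ∃ V ∈ 𝓝 x, ∀ y ∈ V ∩ F, y = x := by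
    intro x hx
    have hnacc : ¬ AccPt x (Filter.principal F) := fun hacc => hx.2 (h hacc)
    rw [accPt_iff_nhds] at hnacc
    push_neg at hnacc
    obtain ⟨V, hV, hV2⟩ := hnacc
    exact ⟨V, hV, hV2⟩
  choose! V hV1 hV2 using key
  obtain ⟨t, htsub, hcov⟩ := hcpt.elim_nhds_subcover V hV1
  apply t.finite_toSet.subset
  intro y hy
  obtain ⟨x, hxt, hyx⟩ := Set.mem_iUnion₂.mp (hcov hy)
  have := hV2 x (htsub x hxt) y ⟨hyx, hy.1⟩
  simpa [this] using hxt

/-- The key combinatorial lemma, by induction on the Cantor–Bendixson height of the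
derived set of `F`. -/
lemma key_lemma {K : Type u} [TopologicalSpace K] [CompactSpace K] [T2Space K]
    (lam : Cardinal.{u}) (hreg : lam.IsRegular) (hunc : Cardinal.aleph0 < lam) :
    ∀ (m : ℕ) (F : Set K), IsClosed F → lam ≤ Cardinal.mk F →
      Cardinal.mk (derivSet F) < lam → derivSet^[m] (derivSet F) = ∅ →
      ∃ (p : K) (A : Set K), A ⊆ F \ {p} ∧ Cardinal.mk A = lam ∧
        ∀ U : Set K, IsOpen U → p ∈ U → (A \ U).Finite := by
  intro m
  induction m with
  | zero =>
    intro F hF hlam hC h0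
    exfalso
    simp only [Function.iterate_zero, id] at h0
    have hfin : (F \ ∅).Finite :=
      finite_diff_of_derivSet_subset hF isOpen_empty (by rw [h0])
    rw [Set.diff_empty] at hfin
    exact absurd hlam (not_le.mpr (hfin.lt_aleph0.trans_le hreg.aleph0_le))
  | succ m ih =>
    intro F hF hlam hC hht
    set C := derivSet F with hCdef
    set C1 := derivSet C with hC1def
    have hCclosed : IsClosed C := isClosed_derivedSet F
    by_cases hx : ∃ x ∈ C \ C1, ∀ V : Set K, IsOpen V → x ∈ V →
        lam ≤ Cardinal.mk (F ∩ V : Set K)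
    · -- Case A: some isolated point of `C` is a `lam`-complete accumulation point of `F`.
      obtain ⟨x, hxmem, hxbig⟩ := hx
      have hxC : x ∈ C := hxmem.1
      have hnacc : ¬ AccPt x (Filter.principal C) := hxmem.2
      rw [accPt_iff_nhds] at hnacc
      push_neg at hnacc
      obtain ⟨N, hN, hNiso⟩ := hnacc
      obtain ⟨V', hV'N, hV'open, hxV'⟩ := mem_nhds_iff.mp hN
      have hclosed2 : IsClosed (C \ V') := hCclosed.sdiff hV'open
      have hdisj : Disjoint ({x} : Set K) (C \ V') := by
        simp only [Set.disjoint_singleton_left, Set.mem_diff, not_and, not_not]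
        intro _; exact hxV'
      obtain ⟨W, Y, hWopen, hYopen, hxW, hCY, hWY⟩ :=
        NormalSpace.normal {x} (C \ V') isClosed_singleton hclosed2 hdisj
      set W' := W ∩ V' with hW'def
      have hxW' : x ∈ W' := ⟨hxW rfl, hxV'⟩
      have h1 : lam ≤ Cardinal.mk (F ∩ W' : Set K) :=
        hxbig W' (hWopen.inter hV'open) hxW'
      have h2 : lam ≤ Cardinal.mk ((F ∩ W') \ {x} : Set K) := by
        by_contra hlt
        push_neg at hlt
        have hsub : F ∩ W' ⊆ ((F ∩ W') \ {x}) ∪ ({x} : Set K) := by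
          intro y hy
          by_cases hyx : y = x
          · exact Or.inr (by simp [hyx])
          · exact Or.inl ⟨hy, by simp [hyx]⟩
        have hle : Cardinal.mk (F ∩ W' : Set K) ≤
            Cardinal.mk ((F ∩ W') \ {x} : Set K) + Cardinal.mk ({x} : Set K) :=
          (Cardinal.mk_le_mk_of_subset hsub).trans (Cardinal.mk_union_le _ _)
        have hone : Cardinal.mk ({x} : Set K) < lam := by
          rw [Cardinal.mk_singleton]
          exact lt_of_lt_of_le Cardinal.one_lt_aleph0 hreg.aleph0_le
        have : Cardinal.mk (F ∩ W' : Set K) < lam :=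
          hle.trans_lt (Cardinal.add_lt_of_lt hreg.aleph0_le hlt hone)
        exact absurd h1 (not_le.mpr this)
      obtain ⟨A, hAsub, hAcard⟩ := Cardinal.le_mk_iff_exists_subset.mp h2
      refine ⟨x, A, ?_, hAcard, ?_⟩
      · intro a ha
        obtain ⟨⟨haF, _⟩, hax⟩ := hAsub ha
        exact ⟨haF, hax⟩
      · intro U hUopen hxU
        have hcover : derivSet F ⊆ U ∪ Y := by
          intro c hc
          by_cases hcx : c = x
          · exact Or.inl (hcx ▸ hxU)
          · refine Or.inr (hCY ⟨hc, fun hcV' => ?_⟩)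
            exact hcx (hNiso c ⟨hV'N hcV', hc⟩)
        have hfin := finite_diff_of_derivSet_subset hF (hUopen.union hYopen) hcover
        apply hfin.subset
        rintro a ⟨haA, haU⟩
        obtain ⟨⟨haF, haW'⟩, _⟩ := hAsub haA
        refine ⟨haF, ?_⟩
        rintro (h | h)
        · exact haU h
        · exact (Set.disjoint_left.mp hWY haW'.1) h
    · -- Case B: remove small neighborhoods of all isolated points of `C` and recurse.
      push_neg at hx
      choose! V hVopen hVmem hVsmall using hx
      set G := ⋃ x ∈ C \ C1, V x with hGdef
      set F' := F \ G with hF'def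
      have hGopen : IsOpen G := isOpen_biUnion fun x hx => hVopen x hx
      have hF'closed : IsClosed F' := hF.sdiff hGopen
      have hsmall : Cardinal.mk (F ∩ G : Set K) < lam := by
        have heq : F ∩ G = ⋃ i : ↥(C \ C1), (F ∩ V i) := by
          ext y
          simp only [Set.mem_inter_iff, hGdef, Set.mem_iUnion, Set.iUnion_coe_set]
          tauto
        rw [heq]
        refine Cardinal.mk_iUnion_le_sum_mk.trans_lt
          (Cardinal.sum_lt_of_isRegular hreg ?_ ?_)
        · exact lt_of_le_of_lt (Cardinal.mk_le_mk_of_subset Set.diff_subset) hC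
        · exact fun i => hVsmall i i.2
      have hlam' : lam ≤ Cardinal.mk F' := by
        by_contra hlt
        push_neg at hlt
        have hsub : F ⊆ F' ∪ (F ∩ G) := by
          intro y hy
          by_cases hyG : y ∈ G
          · exact Or.inr ⟨hy, hyG⟩
          · exact Or.inl ⟨hy, hyG⟩
        have hle : Cardinal.mk F ≤ Cardinal.mk F' + Cardinal.mk (F ∩ G : Set K) :=
          (Cardinal.mk_le_mk_of_subset hsub).trans (Cardinal.mk_union_le _ _)
        exact absurd hlam
          (not_le.mpr (hle.trans_lt (Cardinal.add_lt_of_lt hreg.aleph0_le hlt hsmall)))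
      have hsubC1 : derivSet F' ⊆ C1 := by
        intro y hy
        have hyC : y ∈ C := derivSet_mono Set.diff_subset hy
        by_contra hyC1
        have hymem : y ∈ C \ C1 := ⟨hyC, hyC1⟩
        have hnacc : ¬ AccPt y (Filter.principal F') := by
          rw [accPt_iff_nhds]
          push_neg
          refine ⟨V y, (hVopen y hymem).mem_nhds (hVmem y hymem), ?_⟩
          rintro z ⟨hzV, hzF'⟩
          exact absurd (Set.mem_biUnion hymem hzV) hzF'.2
        exact hnacc hy
      have hC1subC : C1 ⊆ C := (isClosed_iff_derivedSet_subset C).mp hCclosed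
      have hcard' : Cardinal.mk (derivSet F') < lam :=
        lt_of_le_of_lt (Cardinal.mk_le_mk_of_subset (hsubC1.trans hC1subC)) hC
      have hht' : derivSet^[m] (derivSet F') = ∅ := by
        have hsub2 : derivSet^[m] (derivSet F') ⊆ derivSet^[m] C1 :=
          derivSet_iter_mono m hsubC1
        have h2 : derivSet^[m] C1 = ∅ := by
          rw [hC1def, ← Function.iterate_succ_apply derivSet m C]
          exact hht
        rw [← Set.subset_empty_iff]
        exact h2 ▸ hsub2
      obtain ⟨p, A, hA1, hA2, hA3⟩ := ih F' hF'closed hlam' hcard' hht'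
      exact ⟨p, A, hA1.trans (Set.diff_subset_diff_left Set.diff_subset), hA2, hA3⟩

/-- From a discrete family converging to a point, build an embedding of the one-point
compactification of a discrete space. -/
lemma embed_helper {K : Type u} [TopologicalSpace K] [CompactSpace K] [T2Space K]
    {D : Type u} (f : D → K) (p : K) (hinj : Function.Injective f) (hp : ∀ d, f d ≠ p)
    (hconv : ∀ U : Set K, IsOpen U → p ∈ U → {d | f d ∉ U}.Finite) :
    ∃ e : DiscreteOnePoint D → K, Topology.IsEmbedding e := by
  letI : TopologicalSpace D := ⊥
  haveI : DiscreteTopology D := ⟨rfl⟩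
  let e : OnePoint D → K := fun o => o.elim p f
  have hcont : Continuous e := by
    rw [OnePoint.continuous_iff_from_discrete]
    intro s hs
    have hps : p ∈ s := mem_of_mem_nhds hs
    obtain ⟨U, hUs, hUopen, hpU⟩ := mem_nhds_iff.mp hs
    rw [Filter.mem_map, Filter.mem_cofinite]
    apply (hconv U hUopen hpU).subset
    intro d hd
    simp only [Set.mem_compl_iff, Set.mem_preimage] at hd
    exact fun hdU => hd (hUs hdU)
  have hinj' : Function.Injective e := by
    intro a b hab
    induction a using OnePoint.rec with
    | infty =>
      induction b using OnePoint.rec with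
      | infty => rfl
      | coe b => exact absurd hab.symm (hp b)
    | coe a =>
      induction b using OnePoint.rec with
      | infty => exact absurd hab (hp a)
      | coe b => exact congrArg _ (hinj hab)
  exact ⟨e, (hcont.isClosedEmbedding hinj').toIsEmbedding⟩

/-- A compact Hausdorff space of finite Cantor–Bendixson height whose
cardinality is at least an uncountable regular cardinal `λ` contains a homeomorphic copy
of the one-point compactification `A(λ)` of a discrete space of cardinality `λ`. -/
theorem stmt6 {K : Type u} [TopologicalSpace K] [CompactSpace K] [T2Space K]
    (hht : ∃ n : ℕ, derivSet^[n] (Set.univ : Set K) = ∅)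
    (lam : Cardinal.{u}) (hreg : lam.IsRegular) (hunc : Cardinal.aleph0 < lam)
    (hcard : lam ≤ Cardinal.mk K) :
    ∃ (D : Type u), Cardinal.mk D = lam ∧
      ∃ e : DiscreteOnePoint D → K, Topology.IsEmbedding e := by
  obtain ⟨n, hn⟩ := hht
  have hPn : Cardinal.mk (derivSet^[n] (Set.univ : Set K)) < lam := by
    rw [hn]
    simpa using lt_of_lt_of_le Cardinal.aleph0_pos hreg.aleph0_le
  have hex : ∃ k, Cardinal.mk (derivSet^[k] (Set.univ : Set K)) < lam := ⟨n, hPn⟩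
  set k := Nat.find hex with hkdef
  have hk : Cardinal.mk (derivSet^[k] (Set.univ : Set K)) < lam := Nat.find_spec hex
  have hk0 : k ≠ 0 := by
    intro h
    rw [h] at hk
    simp only [Function.iterate_zero, id] at hk
    rw [Cardinal.mk_univ] at hk
    exact absurd hcard (not_le.mpr hk)
  obtain ⟨k', hkk'⟩ := Nat.exists_eq_succ_of_ne_zero hk0
  set F := derivSet^[k'] (Set.univ : Set K) with hFdef
  have hFclosed : IsClosed F := by
    cases k' with
    | zero => rw [hFdef, Function.iterate_zero, id]; exact isClosed_univ
    | succ j =>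
      rw [hFdef, Function.iterate_succ_apply']
      exact isClosed_derivedSet _
  have hFcard : lam ≤ Cardinal.mk F := by
    have := Nat.find_min hex (by omega : k' < k)
    exact not_lt.mp this
  have hCcard : Cardinal.mk (derivSet F) < lam := by
    have : derivSet F = derivSet^[k] (Set.univ : Set K) := by
      rw [hkk', Function.iterate_succ_apply']
    rw [this]
    exact hk
  have hht' : derivSet^[n] (derivSet F) = ∅ := by
    rw [← Set.subset_empty_iff, ← hn]
    exact derivSet_iter_mono n (Set.subset_univ _)
  obtain ⟨p, A, hsub, hAcard, hconv⟩ :=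
    key_lemma lam hreg hunc n F hFclosed hFcard hCcard hht'
  refine ⟨↥A, hAcard, ?_⟩
  refine embed_helper (K := K) (D := ↥A) Subtype.val p
    (fun a b hab => Subtype.ext hab) (fun d hd => (hsub d.2).2 hd) ?_
  intro U hUopen hpU
  apply ((hconv U hUopen hpU).preimage
    (Set.injOn_of_injective Subtype.val_injective)).subset
  intro d hd
  exact ⟨d.2, hd⟩
end

section
/- Let n ≥ 2, let K = {0,…,n−1}^ω with the product measure λ giving each coordinate the uniform distribution, let F ⊆ K be a closed set with λ(F) > 0. Then there exist x ∈ F and k₁ ∈ ω such that for all k ≥ k₁ and all i < n, the basic clopen set [x|k ⌢ i] (sequences extending x restricted to k followed by the digit i) meets F. -/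
/-!
Call `x ∈ F` bad at level `k` if some one-digit extension `[x|k ⌢ i]` misses `F`. Each such
dead child lies in the set of points whose cylinders still meet `F` at length `k` but no longer
at length `k + 1`; these exit sets are disjoint for different `k`. Since every cylinder carries at
most `n` times the measure of each of its children, the bad points of level `k` have measure at
most `n` times that of the `k`-th exit set, so the measures of the bad sets have a finite sum and,
by Borel–Cantelli, almost every point of `F` is bad at only finitely many levels.
-/

open MeasureTheory Filter Function
open scoped ENNReal

namespace PiNat

variable {α : Type*}

theorem measurableSet_cylinder [MeasurableSpace α] [MeasurableSingletonClass α]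
    (x : ℕ → α) (k : ℕ) : MeasurableSet (cylinder x k) := by
  rw [cylinder_eq_pi]
  exact MeasurableSet.pi (Set.to_countable _) fun i _ => measurableSet_singleton (x i)

theorem cylinder_update_succ (x : ℕ → α) (k : ℕ) (i : α) :
    cylinder (update x k i) (k + 1) = {y | (∀ j < k, y j = x j) ∧ y k = i} := by
  ext y
  simp only [mem_cylinder_iff, Set.mem_ofPred_eq, Nat.lt_succ_iff_lt_or_eq, or_imp, forall_and,
    forall_eq, update_self]
  refine and_congr_left' (forall₂_congr fun j hj => ?_)
  rw [update_of_ne hj.ne]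

theorem cylinder_update_succ_subset (x : ℕ → α) (k : ℕ) (i : α) :
    cylinder (update x k i) (k + 1) ⊆ cylinder x k := by
  rw [← iUnion_cylinder_update x k]
  exact Set.subset_iUnion (fun i => cylinder (update x k i) (k + 1)) i

def exitSet (F : Set (ℕ → α)) (k : ℕ) : Set (ℕ → α) :=
  {y | ¬Disjoint (cylinder y k) F ∧ Disjoint (cylinder y (k + 1)) F}

theorem pairwise_disjoint_exitSet (F : Set (ℕ → α)) : Pairwise (Disjoint on exitSet F) := by
  refine (pairwise_disjoint_on _).2 fun k l hkl => Set.disjoint_left.2 ?_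
  rintro y ⟨-, hk⟩ ⟨hl, -⟩
  exact hl (hk.mono_left (cylinder_anti y hkl))

def deadChildSet (F : Set (ℕ → α)) (k : ℕ) : Set (ℕ → α) :=
  {x | ∃ i, Disjoint (cylinder (update x k i) (k + 1)) F}

theorem cylinder_update_subset_exitSet {F : Set (ℕ → α)} {x : ℕ → α} {k : ℕ} {i : α}
    (hx : x ∈ F) (hi : Disjoint (cylinder (update x k i) (k + 1)) F) :
    cylinder (update x k i) (k + 1) ⊆ exitSet F k := by
  intro y hy
  have hk : cylinder y k = cylinder x k :=
    mem_cylinder_iff_eq.1 (cylinder_update_succ_subset x k i hy)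
  refine ⟨?_, (mem_cylinder_iff_eq.1 hy).symm ▸ hi⟩
  rw [hk]
  exact Set.not_disjoint_iff.2 ⟨x, self_mem_cylinder x k, hx⟩

variable [MeasurableSpace α] [MeasurableSingletonClass α] [Countable α]
  {μ : Measure (ℕ → α)} {C : ℝ≥0∞}

theorem exists_measurableSet_subset_measure_le_mul {k : ℕ} {S T : Set (ℕ → α)}
    (hμ : ∀ x i, μ (cylinder x k) ≤ C * μ (cylinder (update x k i) (k + 1)))
    (hST : ∀ x ∈ S, ∃ i, cylinder (update x k i) (k + 1) ⊆ T) :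
    ∃ E ⊆ T, MeasurableSet E ∧ μ S ≤ C * μ E := by
  choose c hc using hST
  -- one representative `x ∈ R` for each cylinder of length `k` that meets `S`
  obtain ⟨R, hRS, hR⟩ := Set.exists_subset_bijOn S fun x => res x k
  have : Countable R :=
    (hR.mapsTo.countable_of_injOn hR.injOn (Set.to_countable _)).to_subtype
  set child : R → Set (ℕ → α) := fun x => cylinder (update x k (c x (hRS x.2))) (k + 1)
  have hcover : S ⊆ ⋃ x : R, cylinder x k := by
    intro y hy
    obtain ⟨x, hx, hxy⟩ := hR.surjOn (Set.mem_image_of_mem _ hy)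
    exact Set.mem_iUnion.2 ⟨⟨x, hx⟩, by rw [cylinder_eq_res]; exact hxy.symm⟩
  have hdisj : Pairwise (Disjoint on child) := by
    intro x x' hne
    refine Set.disjoint_left.2 fun y hyx hyx' => hne (Subtype.ext (hR.injOn x.2 x'.2 ?_))
    have hyx := cylinder_update_succ_subset _ _ _ hyx
    have hyx' := cylinder_update_succ_subset _ _ _ hyx'
    rw [cylinder_eq_res] at hyx hyx'
    exact hyx.symm.trans hyx'
  refine ⟨⋃ x, child x, Set.iUnion_subset fun x => hc x (hRS x.2),
    MeasurableSet.iUnion fun x => measurableSet_cylinder _ _, ?_⟩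
  calc μ S ≤ μ (⋃ x : R, cylinder x k) := measure_mono hcover
    _ ≤ ∑' x : R, μ (cylinder x k) := measure_iUnion_le _
    _ ≤ ∑' x : R, C * μ (child x) := ENNReal.tsum_le_tsum fun x => hμ x _
    _ = C * μ (⋃ x, child x) := by
      rw [ENNReal.tsum_mul_left, measure_iUnion hdisj fun x => measurableSet_cylinder _ _]

theorem tsum_measure_inter_deadChildSet_le
    (hμ : ∀ x k i, μ (cylinder x k) ≤ C * μ (cylinder (update x k i) (k + 1)))
    (F : Set (ℕ → α)) : ∑' k, μ (F ∩ deadChildSet F k) ≤ C * μ Set.univ := by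
  have hE : ∀ k, ∃ E ⊆ exitSet F k, MeasurableSet E ∧ μ (F ∩ deadChildSet F k) ≤ C * μ E :=
    fun k => exists_measurableSet_subset_measure_le_mul (hμ · k)
      fun x ⟨hxF, i, hi⟩ => ⟨i, cylinder_update_subset_exitSet hxF hi⟩
  choose E hEF hEm hE using hE
  have hEdisj : Pairwise (Disjoint on E) :=
    (pairwise_disjoint_exitSet F).mono fun k l h => h.mono (hEF k) (hEF l)
  calc ∑' k, μ (F ∩ deadChildSet F k) ≤ ∑' k, C * μ (E k) := ENNReal.tsum_le_tsum hE
    _ = C * μ (⋃ k, E k) := by rw [ENNReal.tsum_mul_left, measure_iUnion hEdisj hEm]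
    _ ≤ C * μ Set.univ := by gcongr; exact Set.subset_univ _

theorem ae_eventually_forall_cylinder_update_inter_nonempty [IsFiniteMeasure μ]
    (hμ : ∀ x k i, μ (cylinder x k) ≤ C * μ (cylinder (update x k i) (k + 1))) (hC : C ≠ ∞)
    (F : Set (ℕ → α)) :
    ∀ᵐ x ∂μ, x ∈ F → ∀ᶠ k in atTop, ∀ i, (cylinder (update x k i) (k + 1) ∩ F).Nonempty := by
  have hsum : ∑' k, μ (F ∩ deadChildSet F k) ≠ ∞ :=
    ne_top_of_le_ne_top (ENNReal.mul_ne_top hC (measure_ne_top μ _))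
      (tsum_measure_inter_deadChildSet_le hμ F)
  filter_upwards [ae_eventually_notMem hsum] with x hx hxF
  filter_upwards [hx] with k hk i
  exact Set.not_disjoint_iff_nonempty_inter.1 fun hi => hk ⟨hxF, i, hi⟩

end PiNat

open PiNat

theorem stmt10_general (n : ℕ)
    (μ : Measure (ℕ → Fin n))
    (hcyl : ∀ (k : ℕ) (σ : Fin k → Fin n),
      μ {y | ∀ j : Fin k, y j = σ j} = (1 / (n : ENNReal)) ^ k)
    (F : Set (ℕ → Fin n)) (hpos : 0 < μ F) :
    ∃ x ∈ F, ∃ k₁ : ℕ, ∀ k ≥ k₁, ∀ i : Fin n,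
      ({y : ℕ → Fin n | (∀ j < k, y j = x j) ∧ y k = i} ∩ F).Nonempty := by
  have hμ : ∀ (x : ℕ → Fin n) k, μ (cylinder x k) = (1 / (n : ℝ≥0∞)) ^ k := fun x k => by
    convert hcyl k (fun j => x j) using 2
    ext y
    simp [Fin.forall_iff]
  have : IsFiniteMeasure μ := ⟨by simpa using (hcyl 0 Fin.elim0).trans_lt (by simp)⟩
  have hdoubling : ∀ (x : ℕ → Fin n) k i,
      μ (cylinder x k) ≤ n * μ (cylinder (update x k i) (k + 1)) := fun x k i => by
    have hn : (n : ℝ≥0∞) ≠ 0 := by exact_mod_cast (x 0).pos.ne'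
    rw [hμ, hμ, pow_succ, mul_left_comm, one_div, ENNReal.mul_inv_cancel hn (by simp), mul_one]
  obtain ⟨x, hxF, hx⟩ := Measure.exists_mem_of_measure_ne_zero_of_ae hpos.ne' <| ae_restrict_of_ae <|
    ae_eventually_forall_cylinder_update_inter_nonempty hdoubling (ENNReal.natCast_ne_top n) F
  obtain ⟨k₁, hk₁⟩ := eventually_atTop.1 (hx hxF)
  exact ⟨x, hxF, k₁, fun k hk i => cylinder_update_succ x k i ▸ hk₁ k hk i⟩

/-- Let `K = {0,…,n−1}^ω` carry the uniform product measure `λ` (characterized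
by `λ([σ]) = n^{-k}` for cylinders of length `k`), and let `F ⊆ K` be closed with
`λ(F) > 0`. Then there are `x ∈ F` and `k₁` such that for all `k ≥ k₁` and all `i < n` the
basic clopen set `[x|k ⌢ i]` meets `F`. -/
theorem stmt10 (n : ℕ) (hn : 2 ≤ n)
    (μ : Measure (ℕ → Fin n))
    (hcyl : ∀ (k : ℕ) (σ : Fin k → Fin n),
      μ {y | ∀ j : Fin k, y j = σ j} = (1 / (n : ENNReal)) ^ k)
    (F : Set (ℕ → Fin n)) (hF : IsClosed F) (hpos : 0 < μ F) :
    ∃ x ∈ F, ∃ k₁ : ℕ, ∀ k ≥ k₁, ∀ i : Fin n,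
      ({y : ℕ → Fin n | (∀ j < k, y j = x j) ∧ y k = i} ∩ F).Nonempty :=
  stmt10_general n μ hcyl F hpos
end

section
/- Let K be an infinite compact Hausdorff space. If K is scattered, then every finite signed Radon measure on K is purely atomic, i.e., a countable linear combination of Dirac measures; consequently the set M(K) of finite signed Radon measures on K has cardinality at most max(|K|^ω, 𝔠). -/
open MeasureTheory Set Function Cardinal

/-!
A regular measure lives on its support, which is closed. If the measure has no atoms, an isolated
point `x` of the support, with `U ∩ support = {x}`, gives an open neighbourhood `U` of `x` of
measure `≤ μ {x} = 0`, contradicting `x ∈ support`. So on a scattered space an atomless regular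
measure vanishes, and a finite regular measure is concentrated on its countably many atoms.
Applying this to both parts of the Jordan decomposition, a regular signed measure is determined by
a sequence of points and its values on them, so there are at most `#((ℕ → K) × (ℕ → ℝ))` of them.
-/

def IsScattered (X : Type*) [TopologicalSpace X] : Prop :=
  ∀ C : Set X, IsClosed C → C.Nonempty → ∃ x ∈ C, ∃ U : Set X, IsOpen U ∧ U ∩ C = {x}

theorem Set.Countable.exists_injective_subset_range {α : Type*} [Infinite α] {s : Set α}
    (hs : s.Countable) : ∃ x : ℕ → α, Injective x ∧ s ⊆ range x := by
  set D := s ∪ range (_root_.Infinite.natEmbedding α)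
  have : Countable D := (hs.union (countable_range _)).to_subtype
  have : Infinite D :=
    ((infinite_range_of_injective (_root_.Infinite.natEmbedding α).injective).mono
      subset_union_right).to_subtype
  obtain ⟨_⟩ := nonempty_denumerable D
  let e := Denumerable.eqv D
  exact ⟨Subtype.val ∘ e.symm, Subtype.val_injective.comp e.symm.injective,
    fun a ha => ⟨e ⟨a, .inl ha⟩, by simp⟩⟩

theorem Cardinal.mk_nat_arrow_prod_nat_arrow_real_le {K : Type u} [Infinite K] :
    #((ℕ → K) × (ℕ → ℝ)) ≤ max (#K ^ ℵ₀) 𝔠 := by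
  have hK : ℵ₀ ≤ #K ^ ℵ₀ := (aleph0_le_mk K).trans (self_le_power _ one_le_aleph0)
  simp [mk_prod, mk_real, lift_continuum, continuum_power_aleph0,
    mul_eq_max hK aleph0_le_continuum]

namespace MeasureTheory.Measure

variable {X : Type*} [TopologicalSpace X] [MeasurableSpace X]

theorem eq_zero_of_isScattered (hX : IsScattered X) (ν : Measure X) [NullSingletonClass ν]
    [ν.Regular] : ν = 0 := by
  by_contra hν
  have hsupp : ν.support.Nonempty := by
    by_contra! h
    apply hν
    rw [← measure_univ_eq_zero, ← compl_empty, ← h]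
    exact measure_compl_support_of_regular
  obtain ⟨x, hx, U, hU, hUx⟩ := hX _ isClosed_support hsupp
  have hxU : x ∈ U := (hUx.symm ▸ mem_singleton x : x ∈ U ∩ ν.support).1
  have hpos : 0 < ν U := (mem_support_iff_forall x).1 hx U (hU.mem_nhds hxU)
  have hnull : ν U ≤ 0 := calc
    ν U ≤ ν (U ∩ ν.support) + ν (U \ ν.support) := measure_le_inter_add_sdiff ν U _
    _ = 0 := by
      rw [hUx, measure_singleton,
        measure_mono_null (sdiff_subset_compl _ _) measure_compl_support_of_regular, add_zero]
  exact hpos.not_ge hnull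

theorem exists_countable_measure_compl_eq_zero_of_isScattered [T2Space X] [BorelSpace X]
    (hX : IsScattered X) (ν : Measure X) [IsFiniteMeasure ν] [ν.Regular] :
    ∃ A : Set X, A.Countable ∧ ν Aᶜ = 0 := by
  set A := {x | 0 < ν {x}}
  have hA : A.Countable :=
    countable_meas_pos_of_disjoint_iUnion measurableSet_singleton
      fun _ _ h => disjoint_singleton.2 h
  have : NullSingletonClass (ν.restrict Aᶜ) := ⟨fun x => by
    rw [restrict_apply (measurableSet_singleton x)]
    by_cases hx : x ∈ A
    · simp [hx]
    · exact measure_mono_null inter_subset_left (le_zero_iff.1 (not_lt.1 hx))⟩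
  refine ⟨A, hA, ?_⟩
  -- `ν.restrict Aᶜ` is again regular, being finite and `InnerRegularCompactLTTop`.
  rw [← restrict_apply_univ, eq_zero_of_isScattered hX (ν.restrict Aᶜ), coe_zero, Pi.zero_apply]

end MeasureTheory.Measure

namespace MeasureTheory.SignedMeasure

variable {α : Type*} [MeasurableSpace α] [MeasurableSingletonClass α]

theorem summable_abs_apply_singleton (μ : SignedMeasure α) {x : ℕ → α} (hx : Injective x) :
    Summable fun n => |μ {x n}| :=
  (summable_measure_toReal (fun n => measurableSet_singleton (x n))
    fun _ _ h => disjoint_singleton.2 (hx.ne h)).of_nonneg_of_le (fun _ => abs_nonneg _)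
    fun _ => norm_le_totalVariation μ _

theorem apply_eq_tsum_indicator (μ : SignedMeasure α) {x : ℕ → α} (hx : Injective x)
    (hμ : μ.totalVariation (range x)ᶜ = 0) {B : Set α} (hB : MeasurableSet B) :
    μ B = ∑' n, B.indicator (fun _ => μ {x n}) (x n) := by
  have hR : MeasurableSet (range x) := (countable_range x).measurableSet
  have hnull : μ (B \ range x) = 0 :=
    μ.null_of_totalVariation_zero (measure_mono_null (sdiff_subset_compl _ _) hμ)
  have hunion : B ∩ range x = ⋃ n, B ∩ {x n} := by
    rw [← iUnion_singleton_eq_range, inter_iUnion]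
  have hterm (n : ℕ) : μ (B ∩ {x n}) = B.indicator (fun _ => μ {x n}) (x n) := by
    by_cases h : x n ∈ B
    · rw [inter_eq_right.2 (singleton_subset_iff.2 h), indicator_of_mem h]
    · rw [inter_singleton_eq_empty.2 h, indicator_of_notMem h, μ.empty]
  calc μ B = μ (B ∩ range x) + μ (B \ range x) := by
        conv_lhs => rw [← inter_union_sdiff B (range x)]
        exact VectorMeasure.of_union (disjoint_sdiff_inter.symm) (hB.inter hR) (hB.diff hR)
    _ = ∑' n, μ (B ∩ {x n}) := by
        rw [hnull, add_zero, hunion]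
        exact VectorMeasure.of_disjoint_iUnion (fun n => hB.inter (measurableSet_singleton _))
          fun _ _ h => (disjoint_singleton.2 (hx.ne h)).mono inter_subset_right inter_subset_right
    _ = _ := tsum_congr hterm

theorem exists_tsum_indicator_of_isScattered {K : Type*} [TopologicalSpace K] [T2Space K]
    [Infinite K] [MeasurableSpace K] [BorelSpace K] (hK : IsScattered K) (μ : SignedMeasure K)
    [μ.toJordanDecomposition.posPart.Regular] [μ.toJordanDecomposition.negPart.Regular] :
    ∃ (x : ℕ → K) (c : ℕ → ℝ), Summable (fun n => |c n|) ∧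
      ∀ B : Set K, MeasurableSet B → μ B = ∑' n, B.indicator (fun _ => c n) (x n) := by
  obtain ⟨A₁, hA₁, hpos⟩ := Measure.exists_countable_measure_compl_eq_zero_of_isScattered hK
    μ.toJordanDecomposition.posPart
  obtain ⟨A₂, hA₂, hneg⟩ := Measure.exists_countable_measure_compl_eq_zero_of_isScattered hK
    μ.toJordanDecomposition.negPart
  obtain ⟨x, hx, hA⟩ := (hA₁.union hA₂).exists_injective_subset_range
  have hμ : μ.totalVariation (range x)ᶜ = 0 := by
    rw [totalVariation, Measure.add_apply,
      measure_mono_null (compl_subset_compl.2 (subset_union_left.trans hA)) hpos,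
      measure_mono_null (compl_subset_compl.2 (subset_union_right.trans hA)) hneg, add_zero]
  exact ⟨x, fun n => μ {x n}, μ.summable_abs_apply_singleton hx,
    fun B hB => μ.apply_eq_tsum_indicator hx hμ hB⟩

end MeasureTheory.SignedMeasure

theorem stmt14_general {K : Type u} [TopologicalSpace K] [T2Space K] [Infinite K]
    [MeasurableSpace K] [BorelSpace K]
    (hscat : ∀ C : Set K, IsClosed C → C.Nonempty → ∃ x ∈ C, ∃ U : Set K, IsOpen U ∧ U ∩ C = {x}) :
    (∀ μ : SignedMeasure K,
      μ.toJordanDecomposition.posPart.Regular → μ.toJordanDecomposition.negPart.Regular →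
      ∃ (x : ℕ → K) (c : ℕ → ℝ), Summable (fun n => |c n|) ∧
        ∀ B : Set K, MeasurableSet B →
          μ B = ∑' n, Set.indicator B (fun _ => c n) (x n)) ∧
    Cardinal.mk {μ : SignedMeasure K //
        μ.toJordanDecomposition.posPart.Regular ∧ μ.toJordanDecomposition.negPart.Regular}
      ≤ max (Cardinal.mk K ^ Cardinal.aleph0.{u}) Cardinal.continuum.{u} := by
  have hrep := fun (μ : SignedMeasure K) (_ : μ.toJordanDecomposition.posPart.Regular)
      (_ : μ.toJordanDecomposition.negPart.Regular) =>
    SignedMeasure.exists_tsum_indicator_of_isScattered hscat μ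
  refine ⟨hrep, ?_⟩
  choose x c _ hμ using hrep
  refine (mk_le_of_injective (f := fun μ => (x μ.1 μ.2.1 μ.2.2, c μ.1 μ.2.1 μ.2.2))
    fun μ ν h => ?_).trans mk_nat_arrow_prod_nat_arrow_real_le
  obtain ⟨hx, hc⟩ := Prod.mk.inj h
  refine Subtype.ext (VectorMeasure.ext fun B hB => ?_)
  rw [hμ μ.1 μ.2.1 μ.2.2 B hB, hμ ν.1 ν.2.1 ν.2.2 B hB, hx, hc]

/-- On an infinite scattered compact Hausdorff space `K`, every finite signed
Radon measure is purely atomic (a countable linear combination of Dirac measures with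
absolutely summable coefficients); consequently the set `M(K)` of signed Radon measures has
cardinality at most `max(|K|^ω, 𝔠)`. -/
theorem stmt14 {K : Type u} [TopologicalSpace K] [CompactSpace K] [T2Space K] [Infinite K]
    [MeasurableSpace K] [BorelSpace K]
    (hscat : ∀ C : Set K, IsClosed C → C.Nonempty → ∃ x ∈ C, ∃ U : Set K, IsOpen U ∧ U ∩ C = {x}) :
    (∀ μ : SignedMeasure K,
      μ.toJordanDecomposition.posPart.Regular → μ.toJordanDecomposition.negPart.Regular →
      ∃ (x : ℕ → K) (c : ℕ → ℝ), Summable (fun n => |c n|) ∧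
        ∀ B : Set K, MeasurableSet B →
          μ B = ∑' n, Set.indicator B (fun _ => c n) (x n)) ∧
    Cardinal.mk {μ : SignedMeasure K //
        μ.toJordanDecomposition.posPart.Regular ∧ μ.toJordanDecomposition.negPart.Regular}
      ≤ max (Cardinal.mk K ^ Cardinal.aleph0.{u}) Cardinal.continuum.{u} :=
  stmt14_general hscat
end

section
/- Let n ≥ 2 and let X ⊆ K = {0,…,n−1}^ω be a set that cannot be covered by countably many closed λ-null sets, where λ is the uniform product measure. For x ∈ K and i < n let Bᵢ(x) = {σ ∈ n^{<ω} : σ⌢i is an initial segment of x}. Then the family 𝒜 = {Bᵢ(x) : x ∈ X, i < n, Bᵢ(x) infinite} is an almost disjoint family of subsets of the countable tree n^{<ω}, and the subfamilies 𝒜ᵢ = {Bᵢ(x) : x ∈ X, Bᵢ(x) infinite} (i < n) are pairwise disjoint and not separated. -/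
/-!
If `S₀, …, S_{n-1}` separated the families, with `⋂ Sᵢ = ∅`, then every `x ∈ X` would
satisfy `x↾m ∈ S_{x m}` for all large `m`. For each `N` the set of branches with this
property from level `N` on is closed, and it is `λ`-null: choosing for every node `σ` a
digit `φ σ` with `σ ∉ S_{φ σ}`, such a branch avoids the digit `φ (x↾m)` at every level
`m ≥ N`, and the cylinders of length `N + t` with this property have total measure at most
`((n - 1) / n) ^ t`. So `X` would be covered by countably many closed null sets.
-/

open MeasureTheory

def Bset {n : ℕ} (i : Fin n) (x : ℕ → Fin n) : Set (List (Fin n)) :=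
  {σ : List (Fin n) | (∀ j : Fin σ.length, σ.get j = x j) ∧ x σ.length = i}

open scoped ENNReal

def initSeg {α : Type*} (x : ℕ → α) (m : ℕ) : List α := List.ofFn fun j : Fin m => x j

section Avoiding

open Finset

variable {α : Type*} [Fintype α] [DecidableEq α]

def avoiding (φ : List α → α) (N k : ℕ) : Finset (Fin k → α) :=
  {τ | ∀ m : Fin k, N ≤ m →
    τ m ≠ φ (List.ofFn fun j : Fin m => τ (Fin.castLE m.isLt.le j))}

lemma avoiding_succ_subset (φ : List α → α) {N k : ℕ} (hN : N ≤ k) :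
    avoiding φ N (k + 1) ⊆
      (avoiding φ N k).biUnion fun ρ => (univ.erase (φ (List.ofFn ρ))).image (Fin.snoc ρ) := by
  intro τ hτ
  simp only [avoiding, mem_filter, mem_univ, true_and] at hτ
  refine mem_biUnion.2
    ⟨Fin.init τ, ?_, mem_image.2 ⟨τ (Fin.last k), ?_, Fin.snoc_init_self τ⟩⟩
  · simp only [avoiding, mem_filter, mem_univ, true_and]
    exact fun m hm => hτ m.castSucc hm
  · exact mem_erase.2 ⟨hτ (Fin.last k) hN, mem_univ _⟩

lemma card_avoiding_le (φ : List α → α) (N t : ℕ) :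
    #(avoiding φ N (N + t)) ≤ Fintype.card α ^ N * (Fintype.card α - 1) ^ t := by
  induction t with
  | zero => simpa using card_le_univ (avoiding φ N N)
  | succ t ih =>
    calc #(avoiding φ N (N + t + 1))
        ≤ #(avoiding φ N (N + t)) * (Fintype.card α - 1) := by
          refine (card_le_card (avoiding_succ_subset φ (Nat.le_add_right N t))).trans
            (card_biUnion_le_card_mul _ _ _ fun ρ _ => card_image_le.trans ?_)
          rw [card_erase_of_mem (mem_univ _), card_univ]
      _ ≤ Fintype.card α ^ N * (Fintype.card α - 1) ^ (t + 1) := by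
          rw [pow_succ, ← mul_assoc]; gcongr

end Avoiding

lemma ENNReal.natCast_pred_mul_one_div_lt_one {k : ℕ} (hk : k ≠ 0) :
    ((k - 1 : ℕ) : ℝ≥0∞) * (1 / k) < 1 := by
  rw [mul_one_div, ENNReal.div_lt_iff (Or.inl (by exact_mod_cast hk))
    (Or.inl (ENNReal.natCast_ne_top k)), one_mul]
  exact_mod_cast Nat.sub_lt (Nat.pos_of_ne_zero hk) one_pos

open Finset in
lemma measure_setOf_ne_eq_zero {α : Type*} [Fintype α] [Nonempty α] [MeasurableSpace α]
    (μ : Measure (ℕ → α))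
    (hcyl : ∀ (k : ℕ) (τ : Fin k → α),
      μ {y | ∀ j : Fin k, y j = τ j} = (1 / (Fintype.card α : ℝ≥0∞)) ^ k)
    (φ : List α → α) (N : ℕ) :
    μ {x | ∀ m, N ≤ m → x m ≠ φ (initSeg x m)} = 0 := by
  classical
  set c := Fintype.card α
  have hc : (c : ℝ≥0∞) * (1 / c) = 1 := by
    rw [one_div, ENNReal.mul_inv_cancel (by simp [c]) (ENNReal.natCast_ne_top c)]
  have hbound : ∀ t, μ {x | ∀ m, N ≤ m → x m ≠ φ (initSeg x m)} ≤
      (((c - 1 : ℕ) : ℝ≥0∞) * (1 / c)) ^ t := fun t =>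
    calc μ {x | ∀ m, N ≤ m → x m ≠ φ (initSeg x m)}
        ≤ μ (⋃ τ ∈ avoiding φ N (N + t), {y | ∀ j : Fin (N + t), y j = τ j}) :=
          measure_mono fun x hx => Set.mem_iUnion₂.2
            ⟨fun j => x j, mem_filter.2 ⟨mem_univ _, fun m => hx m⟩, fun j => rfl⟩
      _ ≤ ∑ τ ∈ avoiding φ N (N + t), μ {y | ∀ j : Fin (N + t), y j = τ j} :=
          measure_biUnion_finset_le _ _
      _ = #(avoiding φ N (N + t)) * (1 / c) ^ (N + t) := by simp [hcyl]
      _ ≤ ((c : ℝ≥0∞) ^ N * ((c - 1 : ℕ) : ℝ≥0∞) ^ t) * (1 / c) ^ (N + t) := by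
          gcongr; exact_mod_cast card_avoiding_le φ N t
      _ = ((c : ℝ≥0∞) * (1 / c)) ^ N * (((c - 1 : ℕ) : ℝ≥0∞) * (1 / c)) ^ t := by ring
      _ = _ := by rw [hc, one_pow, one_mul]
  exact nonpos_iff_eq_zero.1 <| ge_of_tendsto' (ENNReal.tendsto_pow_atTop_nhds_zero_of_lt_one
    (ENNReal.natCast_pred_mul_one_div_lt_one Fintype.card_ne_zero)) hbound

lemma measure_setOf_initSeg_mem_eq_zero {α : Type*} [Fintype α] [Nonempty α] [MeasurableSpace α]
    (μ : Measure (ℕ → α))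
    (hcyl : ∀ (k : ℕ) (τ : Fin k → α),
      μ {y | ∀ j : Fin k, y j = τ j} = (1 / (Fintype.card α : ℝ≥0∞)) ^ k)
    {S : α → Set (List α)} (hS : ⋂ a, S a = ∅) (N : ℕ) :
    μ {x | ∀ m, N ≤ m → initSeg x m ∈ S (x m)} = 0 := by
  have hφ : ∀ σ, ∃ a, σ ∉ S a := fun σ => by
    simpa using Set.eq_empty_iff_forall_notMem.1 hS σ
  choose φ hφ using hφ
  refine measure_mono_null ?_ (measure_setOf_ne_eq_zero μ hcyl φ N)
  exact fun x hx m hm hxm => hφ _ (hxm ▸ hx m hm)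

lemma isClosed_setOf_restrict {α : Type*} [TopologicalSpace α] [DiscreteTopology α] (k : ℕ)
    (P : (Fin k → α) → Prop) : IsClosed {x : ℕ → α | P fun j => x j} :=
  (isClosed_discrete {τ | P τ}).preimage (continuous_pi fun _ => continuous_apply _)

lemma isClosed_setOf_initSeg_mem {α : Type*} [TopologicalSpace α] [DiscreteTopology α]
    (S : α → Set (List α)) (N : ℕ) :
    IsClosed {x : ℕ → α | ∀ m, N ≤ m → initSeg x m ∈ S (x m)} := by
  simp only [Set.ofPred_forall]
  exact isClosed_iInter fun m => isClosed_iInter fun _ => isClosed_setOf_restrict (m + 1)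
    fun τ => List.ofFn (fun j : Fin m => τ j.castSucc) ∈ S (τ (Fin.last m))

section Bset

variable {n : ℕ} {i j : Fin n} {x y : ℕ → Fin n}

lemma eq_initSeg_length_of_mem_Bset {σ : List (Fin n)} (h : σ ∈ Bset i x) :
    σ = initSeg x σ.length :=
  List.ext_get (by simp [initSeg]) fun k h₁ _ => by simpa [initSeg] using h.1 ⟨k, h₁⟩

lemma initSeg_mem_Bset {m : ℕ} (h : x m = i) : initSeg x m ∈ Bset i x :=
  ⟨fun j => by rw [List.get_eq_getElem]; simp [initSeg], by simpa [initSeg] using h⟩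

lemma Bset_inter_Bset_finite (h : x ≠ y ∨ i ≠ j) : (Bset i x ∩ Bset j y).Finite := by
  by_cases hxy : x = y
  · subst hxy
    exact Set.finite_empty.subset fun σ ⟨hσi, hσj⟩ =>
      h.resolve_left (fun hne => hne rfl) (hσi.2.symm.trans hσj.2)
  · obtain ⟨k, hk⟩ := Function.ne_iff.1 hxy
    refine ((Set.finite_Iic k).image (initSeg x)).subset fun σ ⟨hσx, hσy⟩ =>
      ⟨σ.length, Set.mem_Iic.2 (le_of_not_gt fun hlt => hk ?_),
        (eq_initSeg_length_of_mem_Bset hσx).symm⟩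
    exact (hσx.1 ⟨k, hlt⟩).symm.trans (hσy.1 ⟨k, hlt⟩)

lemma exists_forall_initSeg_mem_of_finite_diff {S : Fin n → Set (List (Fin n))}
    (h : ∀ i, (Bset i x \ S i).Finite) : ∃ N, ∀ m, N ≤ m → initSeg x m ∈ S (x m) := by
  have hfin : {m | initSeg x m ∉ S (x m)}.Finite :=
    (Set.finite_iUnion fun i => (h i).image List.length).subset fun m hm =>
      Set.mem_iUnion.2 ⟨x m, initSeg x m, ⟨initSeg_mem_Bset rfl, hm⟩, by simp [initSeg]⟩
  obtain ⟨N, hN⟩ := hfin.bddAbove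
  exact ⟨N + 1, fun m hm => by_contra fun hm' => by have := hN hm'; omega⟩

end Bset

/-- Let `n ≥ 2`, let `λ` be the uniform product measure on `K = n^ω`
(characterized by its values on cylinders), and let `X ⊆ K` be a set not coverable by
countably many closed `λ`-null sets. Then `𝒜 = {Bᵢ(x) : x ∈ X, i < n, Bᵢ(x) infinite}` is
an almost disjoint family of subsets of the countable tree `n^{<ω}`, and the subfamilies
`𝒜ᵢ = {Bᵢ(x) : x ∈ X, Bᵢ(x) infinite}` are pairwise disjoint and not separated. -/
theorem stmt19 (n : ℕ) (hn : 2 ≤ n)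
    (μ : Measure (ℕ → Fin n))
    (hcyl : ∀ (k : ℕ) (σ : Fin k → Fin n),
      μ {y | ∀ j : Fin k, y j = σ j} = (1 / (n : ENNReal)) ^ k)
    (X : Set (ℕ → Fin n))
    (hX : ¬ ∃ C : ℕ → Set (ℕ → Fin n),
      (∀ m, IsClosed (C m) ∧ μ (C m) = 0) ∧ X ⊆ ⋃ m, C m)
    (𝒜i : Fin n → Set (Set (List (Fin n))))
    (h𝒜i : ∀ i, 𝒜i i = {s | ∃ x ∈ X, s = Bset i x ∧ s.Infinite}) :
    (∀ A ∈ ⋃ i, 𝒜i i, A.Infinite) ∧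
    (∀ A ∈ ⋃ i, 𝒜i i, ∀ B ∈ ⋃ i, 𝒜i i, A ≠ B → (A ∩ B).Finite) ∧
    Pairwise (Function.onFun Disjoint 𝒜i) ∧
    ¬ ∃ S : Fin n → Set (List (Fin n)), (⋂ i, S i) = ∅ ∧
      ∀ i, ∀ A ∈ 𝒜i i, (A \ S i).Finite := by
  obtain rfl : 𝒜i = fun i => {s | ∃ x ∈ X, s = Bset i x ∧ s.Infinite} := funext h𝒜i
  refine ⟨?_, ?_, ?_, ?_⟩
  · rintro _ ⟨_, ⟨i, rfl⟩, x, -, rfl, hinf⟩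
    exact hinf
  · rintro _ ⟨_, ⟨i, rfl⟩, x, -, rfl, -⟩ _ ⟨_, ⟨j, rfl⟩, y, -, rfl, -⟩ hne
    exact Bset_inter_Bset_finite (not_and_or.1 fun ⟨hxy, hij⟩ => hne (hxy ▸ hij ▸ rfl))
  · intro i j hij
    refine Set.disjoint_left.2 ?_
    rintro _ ⟨x, -, rfl, hinf⟩ ⟨y, -, hxy, -⟩
    exact hinf ((Bset_inter_Bset_finite (Or.inr hij)).subset fun σ hσ => ⟨hσ, hxy ▸ hσ⟩)
  · rintro ⟨S, hS, hsep⟩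
    have : Nonempty (Fin n) := ⟨⟨0, by omega⟩⟩
    refine hX ⟨fun N => {x | ∀ m, N ≤ m → initSeg x m ∈ S (x m)}, fun N =>
      ⟨isClosed_setOf_initSeg_mem S N,
        measure_setOf_initSeg_mem_eq_zero μ (by simpa using hcyl) hS N⟩, fun x hx => ?_⟩
    refine Set.mem_iUnion.2 (exists_forall_initSeg_mem_of_finite_diff fun i => ?_)
    by_cases hinf : (Bset i x).Infinite
    · exact hsep i _ ⟨x, hx, rfl, hinf⟩
    · exact (Set.not_infinite.1 hinf).sdiff
end
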